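/- arXiv:2207.03275 — 2 statements merged into one kernel-verified Lean document; each statement's English description precedes it below -/
import Mathlib

section
/- Let S_F be a connected shape with n := |S_F| and baseline B := B(S_F). Then there exist a natural number m ≤ 4·|B| + 2·⌈log₂ n⌉ and a chain of connected shapes T_0, T_1, …, T_m with T_0 a singleton and T_m a translate of S_F, such that each step is a growth operation of one of the following two kinds: (i) a node-addition step, where for some direction d ∈ {(1,0), (−1,0), (0,1), (0,−1)} we have T_i ⊆ T_{i+1} ⊆ T_i ∪ {p + d : p ∈ T_i}; or (ii) an RC doubling step, where T_{i+1} = RC_E(T_i, D) or T_{i+1} = RC_N(T_i, D) for some admissible nonempty set D. -/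
/-- Minimum first coordinate of a shape (0 for the empty set). -/
def xmin (S : Finset (ℤ × ℤ)) : ℤ := WithTop.untopD 0 ((S.image Prod.fst).min)

/-- Minimum second coordinate of a shape (0 for the empty set). -/
def ymin (S : Finset (ℤ × ℤ)) : ℤ := WithTop.untopD 0 ((S.image Prod.snd).min)

/-- East full doubling. -/
def DE (S : Finset (ℤ × ℤ)) : Finset (ℤ × ℤ) :=
  S.image (fun p => (2 * p.1 - xmin S, p.2)) ∪
    S.image (fun p => (2 * p.1 - xmin S + 1, p.2))

/-- North full doubling. -/
def DN (S : Finset (ℤ × ℤ)) : Finset (ℤ × ℤ) :=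
  S.image (fun p => (p.1, 2 * p.2 - ymin S)) ∪
    S.image (fun p => (p.1, 2 * p.2 - ymin S + 1))

/-- Apply a sequence of full doubling operations (`true` = east, `false` = north),
in order (head of the list first). -/
def applySeq (σ : List Bool) (S : Finset (ℤ × ℤ)) : Finset (ℤ × ℤ) :=
  σ.foldl (fun T b => if b then DE T else DN T) S

/-- The (p,q)-rectangle around an integer point. -/
noncomputable def Rec2 (u : ℤ × ℤ) (p q : ℕ) : Finset (ℤ × ℤ) :=
  Finset.Icc u.1 (u.1 + (p : ℤ) - 1) ×ˢ Finset.Icc u.2 (u.2 + (q : ℤ) - 1)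

/-- The reconfiguration function `F_{l,k}`. -/
noncomputable def F (l k : ℕ) (S : Finset (ℤ × ℤ)) : Finset (ℤ × ℤ) :=
  S.biUnion fun p =>
    Rec2 (p.1 + ((2 : ℤ) ^ l - 1) * (p.1 - xmin S),
          p.2 + ((2 : ℤ) ^ k - 1) * (p.2 - ymin S)) (2 ^ l) (2 ^ k)

/-- Two grid points are adjacent if they are at orthogonal distance 1. -/
def Adj (u v : ℤ × ℤ) : Prop := (u.1 - v.1).natAbs + (u.2 - v.2).natAbs = 1

/-- A shape is connected if any two of its points are joined by a path of
adjacent points inside the shape. -/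
def ShapeConnected (S : Finset (ℤ × ℤ)) : Prop :=
  ∀ u ∈ S, ∀ v ∈ S,
    Relation.ReflTransGen (fun a b => a ∈ S ∧ b ∈ S ∧ Adj a b) u v

/-- `wD D x` is the number of elements of `D` strictly west of `x`. -/
def wD (D : Finset ℤ) (x : ℤ) : ℕ := (D.filter (· < x)).card

/-- East RC doubling of `S` with doubled column set `D`. -/
def RCE (S : Finset (ℤ × ℤ)) (D : Finset ℤ) : Finset (ℤ × ℤ) :=
  S.image (fun p => (p.1 + (wD D p.1 : ℤ), p.2)) ∪
    (S.filter fun p => p.1 ∈ D).image fun p => (p.1 + (wD D p.1 : ℤ) + 1, p.2)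

/-- North RC doubling of `S` with doubled row set `D`. -/
def RCN (S : Finset (ℤ × ℤ)) (D : Finset ℤ) : Finset (ℤ × ℤ) :=
  S.image (fun p => (p.1, p.2 + (wD D p.2 : ℤ))) ∪
    (S.filter fun p => p.2 ∈ D).image fun p => (p.1, p.2 + (wD D p.2 : ℤ) + 1)

/-- `D` is an admissible doubled column set for `S`. -/
def eastAdmissible (S : Finset (ℤ × ℤ)) (D : Finset ℤ) : Prop :=
  D.Nonempty ∧ ∀ d ∈ D, ∃ y, (d, y) ∈ S

/-- `D` is an admissible doubled row set for `S`. -/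
def northAdmissible (S : Finset (ℤ × ℤ)) (D : Finset ℤ) : Prop :=
  D.Nonempty ∧ ∀ d ∈ D, ∃ x, (x, d) ∈ S

/-- One east or north RC doubling step. -/
def RCStep (S T : Finset (ℤ × ℤ)) : Prop :=
  ∃ D : Finset ℤ,
    (eastAdmissible S D ∧ T = RCE S D) ∨ (northAdmissible S D ∧ T = RCN S D)

/-- One single column or single row doubling step (an RC step with `|D| = 1`). -/
def SingleStep (S T : Finset (ℤ × ℤ)) : Prop :=
  ∃ D : Finset ℤ, D.card = 1 ∧
    ((eastAdmissible S D ∧ T = RCE S D) ∨ (northAdmissible S D ∧ T = RCN S D))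

/-- Translate a shape by a vector. -/
def translateSh (v : ℤ × ℤ) (S : Finset (ℤ × ℤ)) : Finset (ℤ × ℤ) :=
  S.image fun p => (p.1 + v.1, p.2 + v.2)

/-- Single east column doubling at column `d`. -/
def oE (d : ℤ) (T : Finset (ℤ × ℤ)) : Finset (ℤ × ℤ) :=
  (T.filter fun p => p.1 ≤ d) ∪ (T.filter fun p => d ≤ p.1).image fun p => (p.1 + 1, p.2)

/-- The column of `S` at `x`. -/
def colS (S : Finset (ℤ × ℤ)) (x : ℤ) : Finset ℤ := (S.filter fun p => p.1 = x).image Prod.snd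

/-- The row of `S` at `y`. -/
def rowS (S : Finset (ℤ × ℤ)) (y : ℤ) : Finset ℤ := (S.filter fun p => p.2 = y).image Prod.fst

/-- `phiC S x` counts the column changes of `S` in the interval `(xmin S, x]`. -/
noncomputable def phiC (S : Finset (ℤ × ℤ)) (x : ℤ) : ℕ :=
  ((Finset.Icc (xmin S + 1) x).filter fun x' => colS S x' ≠ colS S (x' - 1)).card

/-- `phiR S y` counts the row changes of `S` in the interval `(ymin S, y]`. -/
noncomputable def phiR (S : Finset (ℤ × ℤ)) (y : ℤ) : ℕ :=
  ((Finset.Icc (ymin S + 1) y).filter fun y' => rowS S y' ≠ rowS S (y' - 1)).card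

/-- Column compression of a shape. -/
noncomputable def KC (S : Finset (ℤ × ℤ)) : Finset (ℤ × ℤ) := S.image fun p => ((phiC S p.1 : ℤ), p.2)

/-- Row compression of a shape. -/
noncomputable def KR (S : Finset (ℤ × ℤ)) : Finset (ℤ × ℤ) := S.image fun p => (p.1, (phiR S p.2 : ℤ))

/-- The baseline shape of `S`. -/
noncomputable def Baseline (S : Finset (ℤ × ℤ)) : Finset (ℤ × ℤ) := KR (KC S)

/-- Number of distinct consecutive columns of `S`. -/
noncomputable def mC (S : Finset (ℤ × ℤ)) : ℕ := (S.image Prod.fst).sup (phiC S) + 1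

/-- Number of distinct consecutive rows of `S`. -/
noncomputable def mR (S : Finset (ℤ × ℤ)) : ℕ := (S.image Prod.snd).sup (phiR S) + 1

/-- Consecutive multiplicity of the `i`-th distinct column of `S`. -/
noncomputable def MC (S : Finset (ℤ × ℤ)) (i : ℕ) : ℕ := ((S.image Prod.fst).filter fun x => phiC S x = i).card

/-- Consecutive multiplicity of the `i`-th distinct row of `S`. -/
noncomputable def MR (S : Finset (ℤ × ℤ)) (i : ℕ) : ℕ := ((S.image Prod.snd).filter fun y => phiR S y = i).card

/-- The four unit directions. -/
def dirs : Finset (ℤ × ℤ) := {(1, 0), (-1, 0), (0, 1), (0, -1)}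

/-- One node-addition growth step: a direction `d` is fixed and every new node is
generated at a position `p + d` for an existing node `p`. -/
def AddStep (S T : Finset (ℤ × ℤ)) : Prop :=
  ∃ d ∈ dirs, S ⊆ T ∧ T ⊆ S ∪ S.image (fun p => (p.1 + d.1, p.2 + d.2))


/-!
The construction has three phases. The baseline `B = K_R (K_C S)` is connected, so it grows
from any of its points by adding one adjacent node at a time (`|B| - 1` steps).

Column compression only forgets the length `MC S i` of each run of equal consecutive columns.
Repeating column `i` of `K_C S` `⌈MC S i / 2 ^ s⌉` times and lowering `s` from
`⌈log₂ max_i MC S i⌉ ≤ ⌈log₂ n⌉` to `0` recovers `S` up to translation, and each decrement of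
`s` is one east RC doubling: it doubles the first `⌊c / 2⌋` of the `c` current copies in every
run. Transposed, the same argument undoes the row compression by at most `⌈log₂ n⌉` north
RC doublings.
-/

open Finset Relation

theorem Adj.symm {u v : ℤ × ℤ} (h : Adj u v) : Adj v u := by
  unfold Adj at *; omega

def ShapeAdj (S : Finset (ℤ × ℤ)) (a b : ℤ × ℤ) : Prop := a ∈ S ∧ b ∈ S ∧ Adj a b

instance (S : Finset (ℤ × ℤ)) : Std.Symm (ShapeAdj S) :=
  ⟨fun _ _ h => ⟨h.2.1, h.1, h.2.2.symm⟩⟩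

theorem shapeConnected_singleton (p : ℤ × ℤ) : ShapeConnected {p} := by
  intro u hu v hv
  rw [mem_singleton.1 hu, mem_singleton.1 hv]

theorem ShapeConnected.of_map {S T : Finset (ℤ × ℤ)} (hS : ShapeConnected S)
    (g : ℤ × ℤ → ℤ × ℤ)
    (hg : ∀ a ∈ S, ∀ b ∈ S, Adj a b → ReflTransGen (ShapeAdj T) (g a) (g b))
    (hT : ∀ v ∈ T, ∃ a ∈ S, ReflTransGen (ShapeAdj T) (g a) v) : ShapeConnected T := by
  intro u hu v hv
  obtain ⟨a, ha, hau⟩ := hT u hu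
  obtain ⟨b, hb, hbv⟩ := hT v hv
  have hab : ReflTransGen (ShapeAdj T) (g a) (g b) :=
    ReflTransGen.lift' g (fun x y (hxy : ShapeAdj S x y) => hg x hxy.1 y hxy.2.1 hxy.2.2) a b
      (hS a ha b hb)
  exact (ReflTransGen.stdSymm.symm _ _ hau).trans (hab.trans hbv)

theorem ShapeConnected.image {S : Finset (ℤ × ℤ)} (hS : ShapeConnected S)
    (f : ℤ × ℤ → ℤ × ℤ) (hf : ∀ a ∈ S, ∀ b ∈ S, Adj a b → f a = f b ∨ Adj (f a) (f b)) :
    ShapeConnected (S.image f) := by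
  refine hS.of_map f (fun a ha b hb hab => ?_) fun v hv => ?_
  · rcases hf a ha b hb hab with h | h
    · rw [h]
    · exact .single ⟨mem_image_of_mem f ha, mem_image_of_mem f hb, h⟩
  · obtain ⟨a, ha, rfl⟩ := mem_image.1 hv
    exact ⟨a, ha, .refl⟩

theorem ShapeConnected.insert {T : Finset (ℤ × ℤ)} (hT : ShapeConnected T) {a b : ℤ × ℤ}
    (ha : a ∈ T) (hab : Adj a b) : ShapeConnected (insert b T) := by
  refine hT.of_map id (fun x hx y hy hxy => .single ⟨mem_insert_of_mem hx,
    mem_insert_of_mem hy, hxy⟩) fun v hv => ?_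
  rcases mem_insert.1 hv with rfl | hv
  · exact ⟨a, ha, .single ⟨mem_insert_of_mem ha, mem_insert_self _ _, hab⟩⟩
  · exact ⟨v, hv, .refl⟩

theorem ShapeConnected.exists_mem_fst_eq {S : Finset (ℤ × ℤ)} (hS : ShapeConnected S)
    {p q : ℤ × ℤ} (hp : p ∈ S) (hq : q ∈ S) {x : ℤ} (hpx : p.1 ≤ x) (hxq : x ≤ q.1) :
    ∃ y, (x, y) ∈ S := by
  have hpq := hS p hp q hq
  clear hq
  induction hpq generalizing x with
  | refl => exact ⟨p.2, by rwa [show x = p.1 by omega]⟩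
  | @tail b c _ hbc ih =>
    by_cases hxb : x ≤ b.1
    · exact ih hpx hxb
    · have := hbc.2.2
      unfold Adj at this
      exact ⟨c.2, by rw [show x = c.1 by omega]; exact hbc.2.1⟩

theorem ShapeConnected.exists_adj_of_subset {B T : Finset (ℤ × ℤ)} (hB : ShapeConnected B)
    (hTB : T ⊆ B) (hT : T.Nonempty) (hne : T ≠ B) : ∃ a ∈ T, ∃ b ∈ B, b ∉ T ∧ Adj a b := by
  obtain ⟨u, hu⟩ := hT
  obtain ⟨v, hvB, hvT⟩ := exists_of_ssubset (ssubset_of_subset_of_ne hTB hne)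
  induction hB u (hTB hu) v hvB using ReflTransGen.head_induction_on with
  | refl => exact absurd hu hvT
  | @head a c hac _ ih =>
    by_cases hc : c ∈ T
    · exact ih hc
    · exact ⟨a, hu, c, hac.2.1, hc, hac.2.2⟩

def IsConnectedShape (S : Finset (ℤ × ℤ)) : Prop := S.Nonempty ∧ ShapeConnected S

def StepChain {α : Type*} (P : α → Prop) (r : α → α → Prop) (a b : α) (k : ℕ) : Prop :=
  ∃ T : ℕ → α, T 0 = a ∧ T k = b ∧ (∀ i ≤ k, P (T i)) ∧ ∀ i < k, r (T i) (T (i + 1))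

namespace StepChain

variable {α β : Type*} {P : α → Prop} {r : α → α → Prop} {a b c : α} {k l : ℕ}

theorem refl (ha : P a) : StepChain P r a a 0 :=
  ⟨fun _ => a, rfl, rfl, fun _ _ => ha, fun _ h => absurd h (Nat.not_lt_zero _)⟩

theorem left (h : StepChain P r a b k) : P a := by
  obtain ⟨T, h0, -, hP, -⟩ := h
  exact h0 ▸ hP 0 (Nat.zero_le k)

theorem append (h₁ : StepChain P r a b k) (h₂ : StepChain P r b c l) :
    StepChain P r a c (k + l) := by
  obtain ⟨T₁, h₁0, h₁k, hP₁, hr₁⟩ := h₁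
  obtain ⟨T₂, h₂0, h₂l, hP₂, hr₂⟩ := h₂
  have hT : ∀ i, k ≤ i → (if i ≤ k then T₁ i else T₂ (i - k)) = T₂ (i - k) := by
    intro i hi
    split_ifs with h
    · rw [show i = k by omega, h₁k, Nat.sub_self, h₂0]
    · rfl
  refine ⟨fun i => if i ≤ k then T₁ i else T₂ (i - k), by simp [h₁0], ?_, fun i hi => ?_,
    fun i hi => ?_⟩
  · simp only
    rw [hT _ (by omega), Nat.add_sub_cancel_left, h₂l]
  · by_cases hik : i ≤ k
    · simpa [hik] using hP₁ i hik
    · simpa only [hT i (by omega)] using hP₂ (i - k) (by omega)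
  · by_cases hik : i < k
    · simpa [hik.le, Nat.succ_le_of_lt hik] using hr₁ i hik
    · simp only
      rw [hT i (by omega), hT (i + 1) (by omega), show i + 1 - k = i - k + 1 by omega]
      exact hr₂ (i - k) (by omega)

theorem single (ha : P a) (hb : P b) (hab : r a b) : StepChain P r a b 1 :=
  ⟨fun i => if i = 0 then a else b, rfl, rfl,
    fun i _ => by dsimp only; split_ifs <;> assumption,
    fun i hi => by simpa [Nat.lt_one_iff.1 hi] using hab⟩

theorem mono {r' : α → α → Prop} (h : StepChain P r a b k) (hr : ∀ x y, r x y → r' x y) :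
    StepChain P r' a b k := by
  obtain ⟨T, h0, hk, hP, hT⟩ := h
  exact ⟨T, h0, hk, hP, fun i hi => hr _ _ (hT i hi)⟩

theorem map {P' : β → Prop} {r' : β → β → Prop} (h : StepChain P r a b k) (f : α → β)
    (hP : ∀ x, P x → P' (f x)) (hr : ∀ x y, r x y → r' (f x) (f y)) :
    StepChain P' r' (f a) (f b) k := by
  obtain ⟨T, h0, hk, hPT, hT⟩ := h
  exact ⟨f ∘ T, by simp [h0], by simp [hk], fun i hi => hP _ (hPT i hi),
    fun i hi => hr _ _ (hT i hi)⟩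

theorem of_seq (T : ℕ → α) (h0 : P (T 0)) (hT : ∀ i < k, r (T i) (T (i + 1)))
    (hr : ∀ x y, P x → r x y → P y) : StepChain P r (T 0) (T k) k := by
  refine ⟨T, rfl, rfl, fun i hi => ?_, hT⟩
  induction i with
  | zero => exact h0
  | succ i ih => exact hr _ _ (ih (by omega)) (hT i (by omega))

end StepChain

theorem addStep_insert {T : Finset (ℤ × ℤ)} {a b : ℤ × ℤ} (ha : a ∈ T) (hab : Adj a b) :
    AddStep T (insert b T) := by
  refine ⟨b - a, ?_, subset_insert _ _, fun x hx => ?_⟩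
  · unfold Adj at hab
    simp only [dirs, mem_insert, mem_singleton, Prod.ext_iff, Prod.fst_sub, Prod.snd_sub]
    omega
  · rcases mem_insert.1 hx with rfl | hx
    · exact mem_union_right _ (mem_image.2 ⟨a, ha, by ext <;> simp⟩)
    · exact mem_union_left _ hx

theorem exists_addChain {B : Finset (ℤ × ℤ)} (hB : ShapeConnected B) {p : ℤ × ℤ} (hp : p ∈ B) :
    StepChain IsConnectedShape AddStep {p} B (B.card - 1) := by
  suffices h : ∀ k T, T ⊆ B → IsConnectedShape T → B.card - T.card = k →
      StepChain IsConnectedShape AddStep T B k from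
    h _ {p} (singleton_subset_iff.2 hp) ⟨singleton_nonempty p, shapeConnected_singleton p⟩
      (by rw [card_singleton])
  intro k
  induction k with
  | zero =>
    intro T hTB hT hk
    rw [eq_of_subset_of_card_le hTB (by omega)] at hT ⊢
    exact .refl hT
  | succ k ih =>
    intro T hTB hT hk
    obtain ⟨a, ha, b, hbB, hbT, hab⟩ :=
      hB.exists_adj_of_subset hTB hT.1 (by rintro rfl; omega)
    have hins : IsConnectedShape (insert b T) := ⟨insert_nonempty _ _, hT.2.insert ha hab⟩
    have hrest := ih (insert b T) (insert_subset hbB hTB) hins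
      (by rw [card_insert_of_notMem hbT]; omega)
    rw [add_comm]
    exact (StepChain.single hT hins (addStep_insert ha hab)).append hrest

theorem xmin_eq_min' {S : Finset (ℤ × ℤ)} (hS : S.Nonempty) :
    xmin S = (S.image Prod.fst).min' (hS.image _) := by
  rw [xmin, ← coe_min', WithTop.untopD_coe]

theorem xmin_le {S : Finset (ℤ × ℤ)} {p : ℤ × ℤ} (hp : p ∈ S) : xmin S ≤ p.1 := by
  rw [xmin_eq_min' ⟨p, hp⟩]
  exact min'_le _ _ (mem_image_of_mem _ hp)

theorem exists_mem_fst_eq_xmin {S : Finset (ℤ × ℤ)} (hS : S.Nonempty) :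
    ∃ y, (xmin S, y) ∈ S := by
  obtain ⟨p, hp, hpx⟩ := mem_image.1 (min'_mem _ (hS.image Prod.fst))
  exact ⟨p.2, by rw [xmin_eq_min' hS, ← hpx]; exact hp⟩

theorem ShapeConnected.exists_image_fst_eq_Icc {S : Finset (ℤ × ℤ)} (hc : ShapeConnected S)
    (hS : S.Nonempty) : ∃ hi, S.image Prod.fst = Icc (xmin S) hi := by
  obtain ⟨y₀, hy₀⟩ := exists_mem_fst_eq_xmin hS
  obtain ⟨q, hq, hqx⟩ := mem_image.1 (max'_mem _ (hS.image Prod.fst))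
  refine ⟨q.1, Finset.ext fun x => ⟨fun hx => ?_, fun hx => ?_⟩⟩
  · obtain ⟨p, hp, rfl⟩ := mem_image.1 hx
    exact mem_Icc.2 ⟨xmin_le hp, hqx ▸ le_max' _ _ (mem_image_of_mem _ hp)⟩
  · obtain ⟨y, hy⟩ := hc.exists_mem_fst_eq hy₀ hq (mem_Icc.1 hx).1 (mem_Icc.1 hx).2
    exact mem_image_of_mem Prod.fst hy

theorem mem_colS {S : Finset (ℤ × ℤ)} {x y : ℤ} : y ∈ colS S x ↔ (x, y) ∈ S := by
  simp [colS]

theorem phiC_mono (S : Finset (ℤ × ℤ)) : Monotone (phiC S) :=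
  fun _ _ h => card_le_card (filter_subset_filter _ (Icc_subset_Icc_right h))

theorem phiC_xmin (S : Finset (ℤ × ℤ)) : phiC S (xmin S) = 0 := by
  simp [phiC]

theorem phiC_succ (S : Finset (ℤ × ℤ)) {x : ℤ} (hx : xmin S ≤ x) :
    phiC S (x + 1) = phiC S x + if colS S (x + 1) = colS S x then 0 else 1 := by
  rw [phiC, phiC, ← insert_Icc_right_eq_Icc_add_one (by omega), filter_insert,
    add_sub_cancel_right]
  by_cases h : colS S (x + 1) = colS S x <;> simp [h, card_insert_of_notMem]

theorem colS_eq_of_phiC_eq (S : Finset (ℤ × ℤ)) {x x' : ℤ} (hx : xmin S ≤ x) (hxx' : x ≤ x')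
    (h : phiC S x = phiC S x') : colS S x = colS S x' := by
  induction x', hxx' using Int.leInduction with
  | base => rfl
  | succ n hn ih =>
    have hle : phiC S x ≤ phiC S n := phiC_mono S hn
    have hsucc := phiC_succ S (hx.trans hn)
    have hmono := phiC_mono S (show n ≤ n + 1 by omega)
    rw [ih (by omega)]
    split_ifs at hsucc with hcol
    · exact hcol.symm
    · omega

theorem exists_phiC_eq (S : Finset (ℤ × ℤ)) {x : ℤ} (hx : xmin S ≤ x) :
    ∀ i ≤ phiC S x, ∃ x' ∈ Icc (xmin S) x, phiC S x' = i := by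
  induction x, hx using Int.leInduction with
  | base =>
    intro i hi
    exact ⟨xmin S, by simp, by rw [phiC_xmin S] at hi ⊢; omega⟩
  | succ n hn ih =>
    intro i hi
    by_cases hin : i ≤ phiC S n
    · obtain ⟨x', hx', hx'i⟩ := ih i hin
      exact ⟨x', Icc_subset_Icc_right (by omega) hx', hx'i⟩
    · have := phiC_succ S hn
      exact ⟨n + 1, mem_Icc.2 ⟨by omega, le_rfl⟩, by split_ifs at this <;> omega⟩

theorem KC_connected {S : Finset (ℤ × ℤ)} (hc : ShapeConnected S) : ShapeConnected (KC S) := by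
  have hsucc : ∀ p ∈ S, ∀ q ∈ S, p.1 + 1 = q.1 →
      phiC S q.1 = phiC S p.1 ∨ phiC S q.1 = phiC S p.1 + 1 := by
    intro p hp q _ hpq
    have := phiC_succ S (xmin_le hp)
    rw [hpq] at this
    split_ifs at this <;> omega
  refine hc.image _ fun a ha b hb hab => ?_
  unfold Adj at hab
  rcases (by omega : a.1 = b.1 ∨ a.1 + 1 = b.1 ∨ b.1 + 1 = a.1) with h | h | h
  · simp only [Adj, Prod.mk.injEq, h]
    omega
  · have := hsucc a ha b hb h
    simp only [Adj, Prod.mk.injEq]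
    omega
  · have := hsucc b hb a ha h
    simp only [Adj, Prod.mk.injEq]
    omega

def blockStart (f : ℕ → ℕ) (j : ℕ) : ℕ := ∑ i ∈ range j, f i

/-- The `j`-th of the consecutive blocks of lengths `f 0, f 1, …` tiling `[0, ∞)`. -/
noncomputable def block (f : ℕ → ℕ) (j : ℕ) : Finset ℤ :=
  Ico (blockStart f j : ℤ) (blockStart f j + f j)

theorem blockStart_succ (f : ℕ → ℕ) (j : ℕ) : blockStart f (j + 1) = blockStart f j + f j :=
  sum_range_succ f j

theorem blockStart_add (f g : ℕ → ℕ) (j : ℕ) :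
    blockStart (f + g) j = blockStart f j + blockStart g j :=
  sum_add_distrib

theorem blockStart_add_le {f : ℕ → ℕ} {i j : ℕ} (h : i < j) :
    blockStart f i + f i ≤ blockStart f j :=
  blockStart_succ f i ▸ sum_le_sum_of_subset (range_subset_range.2 h)

theorem eq_of_mem_block {f : ℕ → ℕ} {i j : ℕ} {a : ℤ} (hi : a ∈ block f i)
    (hj : a ∈ block f j) : i = j := by
  simp only [block, mem_Ico] at hi hj
  by_contra hne
  rcases Nat.lt_or_gt_of_ne hne with h | h
  · have := blockStart_add_le (f := f) h
    omega
  · have := blockStart_add_le (f := f) h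
    omega

theorem blockStart_card_fiber {α : Type*} (s : Finset α) (φ : α → ℕ) (k : ℕ) :
    blockStart (fun i => #(s.filter (φ · = i))) k = #(s.filter (φ · < k)) := by
  rw [card_eq_sum_card_fiberwise (f := φ) (t := range k)
    fun x hx => by simpa using (mem_filter.1 hx).2]
  refine sum_congr rfl fun i hi => ?_
  rw [filter_filter]
  exact congrArg card (filter_congr fun x _ => by simp at hi; omega)

theorem card_filter_lt_mem_block {α : Type*} [LinearOrder α] {s : Finset α} {φ : α → ℕ}
    (hφ : MonotoneOn φ s) {x : α} (hx : x ∈ s) :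
    (#(s.filter (· < x)) : ℤ) ∈ block (fun i => #(s.filter (φ · = i))) (φ x) := by
  have hlo : #(s.filter (φ · < φ x)) ≤ #(s.filter (· < x)) := card_le_card fun y hy => by
    rw [mem_filter] at hy ⊢
    exact ⟨hy.1, lt_of_not_ge fun hxy => (hφ hx hy.1 hxy).not_gt hy.2⟩
  have hsub : insert x (s.filter (· < x)) ⊆ s.filter (φ · < φ x + 1) := by
    intro y hy
    rcases mem_insert.1 hy with rfl | hy
    · exact mem_filter.2 ⟨hx, Nat.lt_succ_self _⟩
    · rw [mem_filter] at hy ⊢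
      exact ⟨hy.1, Nat.lt_succ_of_le (hφ hy.1 hx hy.2.le)⟩
  have hhi := card_le_card hsub
  rw [card_insert_of_notMem (by simp)] at hhi
  have hk := blockStart_card_fiber s φ (φ x)
  have hk1 := blockStart_card_fiber s φ (φ x + 1)
  rw [blockStart_succ] at hk1
  simp only [block, mem_Ico]
  omega

/-- Column `i` of `K` (for `i ≥ 0`) is repeated `f i` times, filling the columns of `block f i`. -/
noncomputable def expandCols (K : Finset (ℤ × ℤ)) (f : ℕ → ℕ) : Finset (ℤ × ℤ) :=
  K.biUnion fun p => block f p.1.toNat ×ˢ {p.2}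

theorem mem_expandCols {K : Finset (ℤ × ℤ)} {f : ℕ → ℕ} {a b : ℤ} :
    (a, b) ∈ expandCols K f ↔ ∃ p ∈ K, a ∈ block f p.1.toNat ∧ p.2 = b := by
  simp [expandCols, eq_comm]

theorem mem_KC_of_mem {V : Finset (ℤ × ℤ)} {p : ℤ × ℤ} (hp : p ∈ V) :
    ((phiC V p.1 : ℤ), p.2) ∈ KC V := by
  unfold KC
  exact mem_image_of_mem _ hp

theorem KC_nonempty {V : Finset (ℤ × ℤ)} (hV : V.Nonempty) : (KC V).Nonempty :=
  hV.image _

theorem exists_KC_cols {V : Finset (ℤ × ℤ)} (hc : ShapeConnected V) (hV : V.Nonempty) :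
    ∃ m : ℕ, (∀ p ∈ KC V, 0 ≤ p.1 ∧ p.1 < m) ∧
      ∀ i < m, (∃ b, ((i : ℤ), b) ∈ KC V) ∧ 0 < MC V i := by
  obtain ⟨hi, hs⟩ := hc.exists_image_fst_eq_Icc hV
  obtain ⟨y₀, hy₀⟩ := exists_mem_fst_eq_xmin hV
  have hxhi : xmin V ≤ hi := (mem_Icc.1 (hs ▸ mem_image_of_mem Prod.fst hy₀)).2
  refine ⟨phiC V hi + 1, fun p hp => ?_, fun i hi' => ?_⟩
  · obtain ⟨q, hq, rfl⟩ := mem_image.1 hp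
    have := phiC_mono V (mem_Icc.1 (hs ▸ mem_image_of_mem Prod.fst hq)).2
    simp only
    omega
  · obtain ⟨x, hx, rfl⟩ := exists_phiC_eq V hxhi i (by omega)
    obtain ⟨q, hq, rfl⟩ := mem_image.1 (hs ▸ hx)
    exact ⟨⟨q.2, mem_KC_of_mem hq⟩, card_pos.2 ⟨q.1, mem_filter.2 ⟨hs ▸ hx, rfl⟩⟩⟩

theorem sub_xmin_mem_block_MC {V : Finset (ℤ × ℤ)} (hc : ShapeConnected V) (hV : V.Nonempty)
    {x : ℤ} (hx : x ∈ V.image Prod.fst) : x - xmin V ∈ block (MC V) (phiC V x) := by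
  obtain ⟨hi, hs⟩ := hc.exists_image_fst_eq_Icc hV
  have hx' := mem_Icc.1 (hs ▸ hx)
  have hpos : (#((V.image Prod.fst).filter (· < x)) : ℤ) = x - xmin V := by
    rw [hs, show (Icc (xmin V) hi).filter (· < x) = Ico (xmin V) x by
      ext; simp only [mem_filter, mem_Icc, mem_Ico]; constructor <;> intro <;> omega,
      Int.card_Ico]
    omega
  exact hpos ▸ card_filter_lt_mem_block ((phiC_mono V).monotoneOn _) hx

theorem add_xmin_mem_image_fst {V : Finset (ℤ × ℤ)} (hc : ShapeConnected V) (hV : V.Nonempty)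
    {a : ℤ} {j : ℕ} (ha : a ∈ block (MC V) j) : a + xmin V ∈ V.image Prod.fst := by
  obtain ⟨hi, hs⟩ := hc.exists_image_fst_eq_Icc hV
  have htop : blockStart (MC V) (j + 1) ≤ #(V.image Prod.fst) := by
    unfold MC
    rw [blockStart_card_fiber]
    exact card_le_card (filter_subset _ _)
  rw [blockStart_succ, hs, Int.card_Icc] at htop
  simp only [block, mem_Ico] at ha
  rw [hs, mem_Icc]
  omega

theorem expandCols_KC_MC {V : Finset (ℤ × ℤ)} (hc : ShapeConnected V) (hV : V.Nonempty) :
    expandCols (KC V) (MC V) = translateSh (-xmin V, 0) V := by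
  ext ⟨a, b⟩
  rw [mem_expandCols, translateSh, mem_image]
  constructor
  · rintro ⟨p, hp, ha, rfl⟩
    obtain ⟨⟨x₀, y⟩, h₀, rfl⟩ := mem_image.1 hp
    simp only [Int.toNat_natCast] at ha
    have hx := add_xmin_mem_image_fst hc hV ha
    have hφ : phiC V (a + xmin V) = phiC V x₀ :=
      eq_of_mem_block (by simpa using sub_xmin_mem_block_MC hc hV hx) ha
    obtain ⟨⟨x, y'⟩, hxy, hx⟩ := mem_image.1 hx
    have hcol : colS V (a + xmin V) = colS V x₀ := by
      rcases le_total (a + xmin V) x₀ with h | h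
      · exact colS_eq_of_phiC_eq V (hx ▸ xmin_le hxy) h hφ
      · exact (colS_eq_of_phiC_eq V (xmin_le h₀) h hφ.symm).symm
    exact ⟨(a + xmin V, y), mem_colS.1 (hcol ▸ mem_colS.2 h₀), by simp⟩
  · rintro ⟨⟨x, y⟩, hxy, heq⟩
    simp only [Prod.mk.injEq, add_zero] at heq
    have hK := mem_KC_of_mem hxy
    refine ⟨_, hK, ?_, heq.2⟩
    rw [← heq.1, Int.toNat_natCast, ← sub_eq_add_neg]
    exact sub_xmin_mem_block_MC hc hV (mem_image_of_mem _ hxy)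
theorem mem_RCE {S : Finset (ℤ × ℤ)} {D : Finset ℤ} {a b : ℤ} :
    (a, b) ∈ RCE S D ↔
      ∃ x, (x, b) ∈ S ∧ (a = x + wD D x ∨ x ∈ D ∧ a = x + wD D x + 1) := by
  simp only [RCE, mem_union, mem_image, mem_filter, Prod.ext_iff]
  constructor
  · rintro (⟨p, hp, ha, rfl⟩ | ⟨p, ⟨hp, hD⟩, ha, rfl⟩)
    · exact ⟨p.1, hp, .inl ha.symm⟩
    · exact ⟨p.1, hp, .inr ⟨hD, ha.symm⟩⟩
  · rintro ⟨x, hx, ha | ⟨hD, ha⟩⟩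
    · exact .inl ⟨_, hx, ha.symm, rfl⟩
    · exact .inr ⟨_, ⟨hx, hD⟩, ha.symm, rfl⟩

/-- If the first `δ ≤ f` of `f` consecutive columns are doubled, column `r` lands at offset
`r + min r δ` (its copy one further on), and these offsets fill `[0, f + δ)`. -/
theorem exists_offset_of_lt {f δ s : ℕ} (hδ : δ ≤ f) (hs : s < f + δ) :
    ∃ r < f, s = r + min r δ ∨ (r < δ ∧ s = r + min r δ + 1) := by
  by_cases h : s < 2 * δ
  · obtain ⟨r, hr | hr⟩ := Nat.even_or_odd' s
    · exact ⟨r, by omega, by omega⟩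
    · exact ⟨r, by omega, by omega⟩
  · exact ⟨s - δ, by omega, by omega⟩

/-- In each block `i < m` of `f`, its first `δ i` columns. -/
noncomputable def doubledCols (f δ : ℕ → ℕ) (m : ℕ) : Finset ℤ :=
  (range m).biUnion fun i => Ico (blockStart f i : ℤ) (blockStart f i + δ i)

section DoubledCols

variable {f δ : ℕ → ℕ} {m j r : ℕ}

theorem mem_doubledCols {x : ℤ} :
    x ∈ doubledCols f δ m ↔ ∃ i < m, blockStart f i ≤ x ∧ x < blockStart f i + δ i := by
  simp [doubledCols]

theorem blockStart_add_mem_doubledCols_iff (hδ : ∀ i, δ i ≤ f i) (hj : j < m) (hr : r < f j) :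
    (blockStart f j + r : ℤ) ∈ doubledCols f δ m ↔ r < δ j := by
  rw [mem_doubledCols]
  constructor
  · rintro ⟨i, -, hi⟩
    have hij : i = j := eq_of_mem_block (f := f) (a := blockStart f j + r)
      (by simp only [block, mem_Ico]; have := hδ i; omega) (by simp [block, hr])
    subst hij
    omega
  · intro h
    exact ⟨j, hj, by omega, by omega⟩

theorem wD_doubledCols (hδ : ∀ i, δ i ≤ f i) (hj : j < m) (hr : r < f j) :
    wD (doubledCols f δ m) (blockStart f j + r) = blockStart δ j + min r (δ j) := by
  have hterm : ∀ i, #((Ico (blockStart f i : ℤ) (blockStart f i + δ i)).filter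
      (· < (blockStart f j + r : ℤ))) =
      if i < j then δ i else if i = j then min r (δ j) else 0 := by
    intro i
    rw [Ico_filter_lt, Int.card_Ico]
    have := hδ i
    split_ifs with h₁ h₂
    · have := blockStart_add_le (f := f) h₁
      omega
    · subst h₂
      omega
    · have := blockStart_add_le (f := f) (show j < i by omega)
      omega
  have hdisj : (range m : Set ℕ).PairwiseDisjoint fun i =>
      (Ico (blockStart f i : ℤ) (blockStart f i + δ i)).filter (· < (blockStart f j + r : ℤ)) := by
    intro i _ i' _ hii'
    refine disjoint_left.2 fun x hx hx' => hii' (eq_of_mem_block (f := f) (a := x) ?_ ?_) <;>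
      · simp only [block, mem_filter, mem_Ico] at hx hx' ⊢
        have := hδ i
        have := hδ i'
        omega
  have hlow : ∑ i ∈ range j, (if i < j then δ i else if i = j then min r (δ j) else 0) =
      blockStart δ j :=
    sum_congr rfl fun i hi => if_pos (mem_range.1 hi)
  have hhigh : ∑ i ∈ Ico (j + 1) m, (if i < j then δ i else if i = j then min r (δ j) else 0) =
      0 :=
    sum_eq_zero fun i hi => by
      rw [mem_Ico] at hi
      rw [if_neg (by omega), if_neg (by omega)]
  rw [wD, doubledCols, filter_biUnion, card_biUnion hdisj, sum_congr rfl fun i _ => hterm i,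
    ← sum_range_add_sum_Ico _ (show j + 1 ≤ m by omega), sum_range_succ, hlow, hhigh,
    if_neg (lt_irrefl j), if_pos rfl, add_zero]

theorem exists_mem_block_RCE_iff (hδ : ∀ i, δ i ≤ f i) (hj : j < m) {a : ℤ} :
    (∃ x ∈ block f j, a = x + wD (doubledCols f δ m) x ∨
        x ∈ doubledCols f δ m ∧ a = x + wD (doubledCols f δ m) x + 1) ↔
      a ∈ block (f + δ) j := by
  have hδj := hδ j
  simp only [block, mem_Ico, blockStart_add, Pi.add_apply, Nat.cast_add]
  constructor
  · rintro ⟨x, hx, hax⟩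
    obtain ⟨r, rfl⟩ : ∃ r : ℕ, x = blockStart f j + r := ⟨(x - blockStart f j).toNat, by omega⟩
    have hr : r < f j := by omega
    rw [wD_doubledCols hδ hj hr, blockStart_add_mem_doubledCols_iff hδ hj hr] at hax
    omega
  · intro ha
    obtain ⟨r, hr, hs⟩ := exists_offset_of_lt hδj
      (s := (a - blockStart f j - blockStart δ j).toNat) (by omega)
    refine ⟨blockStart f j + r, by omega, ?_⟩
    rw [wD_doubledCols hδ hj hr, blockStart_add_mem_doubledCols_iff hδ hj hr]
    omega

variable {K : Finset (ℤ × ℤ)}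

theorem RCE_expandCols (hδ : ∀ i, δ i ≤ f i) (hK : ∀ p ∈ K, 0 ≤ p.1 ∧ p.1 < m) :
    RCE (expandCols K f) (doubledCols f δ m) = expandCols K (f + δ) := by
  ext ⟨a, b⟩
  simp only [mem_RCE, mem_expandCols]
  constructor
  · rintro ⟨x, ⟨p, hp, hx, rfl⟩, hax⟩
    have := hK p hp
    exact ⟨p, hp, (exists_mem_block_RCE_iff hδ (by omega)).1 ⟨x, hx, hax⟩, rfl⟩
  · rintro ⟨p, hp, ha, rfl⟩
    have := hK p hp
    obtain ⟨x, hx, hax⟩ := (exists_mem_block_RCE_iff hδ (m := m) (by omega)).2 ha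
    exact ⟨x, ⟨p, hp, hx, rfl⟩, hax⟩

theorem eastAdmissible_doubledCols (hδ : ∀ i, δ i ≤ f i)
    (hocc : ∀ i < m, ∃ b, ((i : ℤ), b) ∈ K) (hpos : ∃ i < m, 0 < δ i) :
    eastAdmissible (expandCols K f) (doubledCols f δ m) := by
  obtain ⟨i, hi, hδi⟩ := hpos
  refine ⟨⟨(blockStart f i : ℤ), mem_doubledCols.2 ⟨i, hi, le_rfl, ?_⟩⟩, fun d hd => ?_⟩
  · omega
  obtain ⟨i, hi, h₁, h₂⟩ := mem_doubledCols.1 hd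
  obtain ⟨b, hb⟩ := hocc i hi
  have := hδ i
  exact ⟨b, mem_expandCols.2 ⟨_, hb, by simp only [block, mem_Ico, Int.toNat_natCast]; omega, rfl⟩⟩

end DoubledCols

def EastStep (S T : Finset (ℤ × ℤ)) : Prop := ∃ D, eastAdmissible S D ∧ T = RCE S D

theorem eastStep_expandCols {f δ : ℕ → ℕ} {m : ℕ} {K : Finset (ℤ × ℤ)} (hδ : ∀ i, δ i ≤ f i)
    (hK : ∀ p ∈ K, 0 ≤ p.1 ∧ p.1 < m) (hocc : ∀ i < m, ∃ b, ((i : ℤ), b) ∈ K)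
    (hpos : ∃ i < m, 0 < δ i) : EastStep (expandCols K f) (expandCols K (f + δ)) :=
  ⟨_, eastAdmissible_doubledCols hδ hocc hpos, (RCE_expandCols hδ hK).symm⟩

theorem wD_add_one (D : Finset ℤ) (x : ℤ) :
    wD D (x + 1) = wD D x + if x ∈ D then 1 else 0 := by
  have hsplit : D.filter (· < x + 1) = D.filter (· < x) ∪ D.filter (· = x) := by
    ext y
    simp only [mem_filter, mem_union]
    constructor
    · rintro ⟨hy, hyx⟩
      rcases lt_or_eq_of_le (Int.lt_add_one_iff.1 hyx) with h | h
      · exact .inl ⟨hy, h⟩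
      · exact .inr ⟨hy, h⟩
    · rintro (⟨hy, h⟩ | ⟨hy, h⟩) <;> exact ⟨hy, by omega⟩
  rw [wD, wD, hsplit, card_union_of_disjoint (disjoint_filter.2 fun _ _ h => h.ne), filter_eq']
  split_ifs <;> simp

theorem shapeConnected_RCE {S : Finset (ℤ × ℤ)} (hS : ShapeConnected S) (D : Finset ℤ) :
    ShapeConnected (RCE S D) := by
  set g : ℤ × ℤ → ℤ × ℤ := fun p => (p.1 + wD D p.1, p.2)
  have hg : ∀ p ∈ S, g p ∈ RCE S D := fun p hp => mem_RCE.2 ⟨p.1, hp, .inl rfl⟩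
  have hcopy : ∀ p ∈ S, p.1 ∈ D → ShapeAdj (RCE S D) (g p) (p.1 + wD D p.1 + 1, p.2) :=
    fun p hp hD => ⟨hg p hp, mem_RCE.2 ⟨p.1, hp, .inr ⟨hD, rfl⟩⟩, by simp [Adj, g]⟩
  have hrow : ∀ a ∈ S, ∀ b ∈ S, a.2 = b.2 → a.1 + 1 = b.1 →
      ReflTransGen (ShapeAdj (RCE S D)) (g a) (g b) := by
    intro a ha b hb h₂ h₁
    have hw := wD_add_one D a.1
    rw [h₁] at hw
    by_cases hD : a.1 ∈ D
    · -- the gap left by doubling column `a.1` is filled by its copy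
      rw [if_pos hD] at hw
      refine .tail (.single (hcopy a ha hD)) ⟨(hcopy a ha hD).2.1, hg b hb, ?_⟩
      simp only [Adj, g]
      omega
    · rw [if_neg hD] at hw
      refine .single ⟨hg a ha, hg b hb, ?_⟩
      simp only [Adj, g]
      omega
  refine hS.of_map g (fun a ha b hb hab => ?_) fun v hv => ?_
  · unfold Adj at hab
    rcases (by omega : a.1 = b.1 ∨ (a.2 = b.2 ∧ a.1 + 1 = b.1) ∨ (a.2 = b.2 ∧ b.1 + 1 = a.1))
      with h | ⟨h₂, h₁⟩ | ⟨h₂, h₁⟩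
    · refine .single ⟨hg a ha, hg b hb, ?_⟩
      simp only [Adj, g, h]
      omega
    · exact hrow a ha b hb h₂ h₁
    · exact ReflTransGen.stdSymm.symm _ _ (hrow b hb a ha h₂.symm h₁)
  · obtain ⟨v₁, v₂⟩ := v
    obtain ⟨x, hx, rfl | ⟨hD, rfl⟩⟩ := mem_RCE.1 hv
    · exact ⟨(x, v₂), hx, .refl⟩
    · exact ⟨(x, v₂), hx, .single (hcopy (x, v₂) hx hD)⟩

theorem expandCols_eq_self {K : Finset (ℤ × ℤ)} {f : ℕ → ℕ} {m : ℕ}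
    (hK : ∀ p ∈ K, 0 ≤ p.1 ∧ p.1 < m) (hf : ∀ i < m, f i = 1) : expandCols K f = K := by
  have hstart : ∀ j ≤ m, blockStart f j = j := fun j hj =>
    (sum_congr rfl fun i hi => hf i (by simp at hi; omega)).trans (by simp)
  have hblock : ∀ p ∈ K, block f p.1.toNat = {p.1} := by
    intro p hp
    have := hK p hp
    ext a
    simp only [block, mem_Ico, mem_singleton, hstart _ (show p.1.toNat ≤ m by omega),
      hf _ (show p.1.toNat < m by omega)]
    omega
  ext ⟨a, b⟩
  rw [mem_expandCols]
  constructor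
  · rintro ⟨p, hp, ha, rfl⟩
    rw [hblock p hp, mem_singleton] at ha
    rwa [ha]
  · intro h
    exact ⟨(a, b), h, by rw [hblock _ h, mem_singleton], rfl⟩

def ceilHalf (a : ℕ) : ℕ := (a + 1) / 2

theorem ceilHalf_iterate_eq_one {s a : ℕ} (h₁ : 1 ≤ a) (h : a ≤ 2 ^ s) :
    ceilHalf^[s] a = 1 := by
  induction s generalizing a with
  | zero =>
    simp only [pow_zero] at h
    simp only [Function.iterate_zero, id]
    omega
  | succ s ih =>
    rw [Function.iterate_succ_apply]
    exact ih (by unfold ceilHalf; omega) (by unfold ceilHalf; rw [pow_succ] at h; omega)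

theorem two_le_ceilHalf_iterate {s a : ℕ} (h : 2 ^ s < a) : 2 ≤ ceilHalf^[s] a := by
  induction s generalizing a with
  | zero =>
    simp only [pow_zero] at h
    exact h
  | succ s ih =>
    rw [Function.iterate_succ_apply]
    exact ih (by unfold ceilHalf; rw [pow_succ] at h; omega)

theorem eastStep_expandCols_ceilHalf {K : Finset (ℤ × ℤ)} {m : ℕ}
    (hK : ∀ p ∈ K, 0 ≤ p.1 ∧ p.1 < m) (hocc : ∀ i < m, ∃ b, ((i : ℤ), b) ∈ K) {g : ℕ → ℕ}
    (hg : ∃ i < m, 2 ≤ g i) : EastStep (expandCols K (ceilHalf ∘ g)) (expandCols K g) := by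
  have hsplit : ceilHalf ∘ g + (fun i => g i / 2) = g := funext fun i => by
    simp only [Pi.add_apply, Function.comp_apply, ceilHalf]
    omega
  obtain ⟨i, hi, hgi⟩ := hg
  have := eastStep_expandCols (f := ceilHalf ∘ g) (δ := fun i => g i / 2)
    (fun i => by simp only [Function.comp_apply, ceilHalf]; omega) hK hocc ⟨i, hi, by omega⟩
  rwa [hsplit] at this

theorem EastStep.isConnectedShape {S T : Finset (ℤ × ℤ)} (h : EastStep S T)
    (hS : IsConnectedShape S) : IsConnectedShape T := by
  obtain ⟨D, -, rfl⟩ := h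
  obtain ⟨p, hp⟩ := hS.1
  exact ⟨⟨_, mem_RCE.2 ⟨p.1, hp, .inl rfl⟩⟩, shapeConnected_RCE hS.2 D⟩

theorem exists_eastChain {V : Finset (ℤ × ℤ)} (hc : ShapeConnected V) (hV : V.Nonempty) :
    ∃ k ≤ Nat.clog 2 V.card,
      StepChain IsConnectedShape EastStep (KC V) (translateSh (-xmin V, 0) V) k := by
  obtain ⟨m, hK, hocc⟩ := exists_KC_cols hc hV
  have hm : (range m).Nonempty := by
    obtain ⟨p, hp⟩ := KC_nonempty hV
    have := hK p hp
    exact nonempty_range_iff.2 (by omega)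
  obtain ⟨i₀, hi₀, hMmax⟩ := exists_mem_eq_sup (range m) hm (MC V)
  set N := Nat.clog 2 (MC V i₀)
  have hMle : ∀ i < m, MC V i ≤ 2 ^ N := fun i hi =>
    ((le_sup (f := MC V) (mem_range.2 hi)).trans_eq hMmax).trans (Nat.le_pow_clog one_lt_two _)
  set F : ℕ → Finset (ℤ × ℤ) := fun t => expandCols (KC V) fun i => ceilHalf^[N - t] (MC V i)
  have hF0 : F 0 = KC V :=
    expandCols_eq_self hK fun i hi => ceilHalf_iterate_eq_one (hocc i hi).2 (hMle i hi)
  have hFN : F N = translateSh (-xmin V, 0) V := by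
    simp only [F, Nat.sub_self, Function.iterate_zero, id]
    exact expandCols_KC_MC hc hV
  have hstep : ∀ t < N, EastStep (F t) (F (t + 1)) := by
    intro t ht
    have hFt : F t = expandCols (KC V) (ceilHalf ∘ fun i => ceilHalf^[N - (t + 1)] (MC V i)) := by
      simp only [F, show N - t = N - (t + 1) + 1 by omega, Function.iterate_succ_apply']
      rfl
    rw [hFt]
    exact eastStep_expandCols_ceilHalf hK (fun i hi => (hocc i hi).1)
      ⟨i₀, mem_range.1 hi₀, two_le_ceilHalf_iterate (Nat.pow_lt_of_lt_clog (by omega))⟩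
  refine ⟨N, Nat.clog_mono_right _ ?_, hF0 ▸ hFN ▸ StepChain.of_seq F
    (hF0 ▸ ⟨KC_nonempty hV, KC_connected hc⟩) hstep fun _ _ hx h => h.isConnectedShape hx⟩
  exact (card_le_card (filter_subset _ _)).trans card_image_le
def swapSh (S : Finset (ℤ × ℤ)) : Finset (ℤ × ℤ) := S.image Prod.swap

theorem mem_swapSh {S : Finset (ℤ × ℤ)} {p : ℤ × ℤ} : p ∈ swapSh S ↔ p.swap ∈ S := by
  simp [swapSh, Prod.swap_eq_iff_eq_swap]

theorem swapSh_swapSh (S : Finset (ℤ × ℤ)) : swapSh (swapSh S) = S := by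
  ext p
  rw [mem_swapSh, mem_swapSh, Prod.swap_swap]

theorem shapeConnected_swapSh {S : Finset (ℤ × ℤ)} (hS : ShapeConnected S) :
    ShapeConnected (swapSh S) := by
  refine hS.image _ fun _ _ _ _ hab => .inr ?_
  unfold Adj at hab ⊢
  simp only [Prod.fst_swap, Prod.snd_swap]
  omega

theorem xmin_swapSh (S : Finset (ℤ × ℤ)) : xmin (swapSh S) = ymin S := by
  rw [xmin, ymin, swapSh, image_image]
  rfl

theorem ymin_KC (S : Finset (ℤ × ℤ)) : ymin (KC S) = ymin S := by
  rw [ymin, ymin, KC, image_image]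
  rfl

theorem KR_eq_swapSh_KC_swapSh (S : Finset (ℤ × ℤ)) : KR S = swapSh (KC (swapSh S)) := by
  have hrow : ∀ y, colS (swapSh S) y = rowS S y := fun y => by
    ext x
    rw [mem_colS, mem_swapSh]
    simp [rowS]
  have hphi : phiC (swapSh S) = phiR S := by
    funext y
    simp only [phiC, phiR, xmin_swapSh, hrow]
  rw [KR, KC, hphi, swapSh, swapSh, image_image, image_image]
  rfl

theorem RCN_swapSh (S : Finset (ℤ × ℤ)) (D : Finset ℤ) :
    RCN (swapSh S) D = swapSh (RCE S D) := by
  rw [RCN, RCE, swapSh, swapSh, image_union, filter_image, image_image, image_image,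
    image_image, image_image]
  rfl

theorem northAdmissible_swapSh {S : Finset (ℤ × ℤ)} {D : Finset ℤ} (h : eastAdmissible S D) :
    northAdmissible (swapSh S) D :=
  ⟨h.1, fun d hd => (h.2 d hd).imp fun _ hy => mem_swapSh.2 hy⟩

theorem swapSh_translateSh (a b : ℤ) (S : Finset (ℤ × ℤ)) :
    swapSh (translateSh (a, b) S) = translateSh (b, a) (swapSh S) := by
  rw [swapSh, swapSh, translateSh, translateSh, image_image, image_image]
  rfl

theorem translateSh_translateSh (v w : ℤ × ℤ) (S : Finset (ℤ × ℤ)) :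
    translateSh v (translateSh w S) = translateSh (w + v) S := by
  rw [translateSh, translateSh, translateSh, image_image]
  exact image_congr fun p _ => by simp [add_assoc]

theorem shapeConnected_translateSh {S : Finset (ℤ × ℤ)} (hS : ShapeConnected S) (v : ℤ × ℤ) :
    ShapeConnected (translateSh v S) := by
  refine hS.image _ fun _ _ _ _ hab => .inr ?_
  unfold Adj at hab ⊢
  simpa only [add_sub_add_right_eq_sub] using hab

theorem RCE_translateSh_snd (c : ℤ) (S : Finset (ℤ × ℤ)) (D : Finset ℤ) :
    RCE (translateSh (0, c) S) D = translateSh (0, c) (RCE S D) := by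
  rw [RCE, RCE, translateSh, translateSh, image_union, filter_image, image_image, image_image,
    image_image, image_image]
  simp only [add_zero]
  rfl

theorem eastAdmissible_translateSh_snd {S : Finset (ℤ × ℤ)} {D : Finset ℤ} (c : ℤ)
    (h : eastAdmissible S D) : eastAdmissible (translateSh (0, c) S) D :=
  ⟨h.1, fun d hd => let ⟨y, hy⟩ := h.2 d hd; ⟨y + c, mem_image.2 ⟨_, hy, by simp⟩⟩⟩

theorem exists_RCChain {S : Finset (ℤ × ℤ)} (hc : ShapeConnected S) (hS : S.Nonempty) :
    ∃ k ≤ 2 * Nat.clog 2 S.card, StepChain IsConnectedShape RCStep (Baseline S)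
      (translateSh (-xmin S, -ymin S) S) k := by
  obtain ⟨k₂, hk₂, h₂⟩ :=
    exists_eastChain (shapeConnected_swapSh (KC_connected hc)) ((KC_nonempty hS).image _)
  obtain ⟨k₃, hk₃, h₃⟩ := exists_eastChain hc hS
  have hnorth : StepChain IsConnectedShape RCStep (Baseline S)
      (translateSh (0, -ymin S) (KC S)) k₂ := by
    have := h₂.map (P' := IsConnectedShape) (r' := RCStep) swapSh
      (fun x hx => ⟨hx.1.image _, shapeConnected_swapSh hx.2⟩)
      fun x _ ⟨D, hD, hy⟩ => ⟨D, .inr ⟨northAdmissible_swapSh hD, by rw [hy, RCN_swapSh]⟩⟩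
    rwa [swapSh_translateSh, swapSh_swapSh, xmin_swapSh, ymin_KC, ← KR_eq_swapSh_KC_swapSh]
      at this
  have heast : StepChain IsConnectedShape RCStep (translateSh (0, -ymin S) (KC S))
      (translateSh (-xmin S, -ymin S) S) k₃ := by
    have := h₃.map (P' := IsConnectedShape) (r' := RCStep) (translateSh (0, -ymin S))
      (fun x hx => ⟨hx.1.image _, shapeConnected_translateSh hx.2 _⟩)
      fun x _ ⟨D, hD, hy⟩ => ⟨D, .inl ⟨eastAdmissible_translateSh_snd _ hD,
        by rw [hy, RCE_translateSh_snd]⟩⟩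
    rwa [translateSh_translateSh, Prod.mk_add_mk, add_zero, zero_add] at this
  have hcard : (swapSh (KC S)).card ≤ S.card := card_image_le.trans card_image_le
  exact ⟨k₂ + k₃, by have := Nat.clog_mono_right 2 hcard; omega, hnorth.append heast⟩

/-- any connected shape `S_F` can be built (up to translation) from a
singleton within `4|B(S_F)| + 2⌈log₂ n⌉` steps, each either a node-addition step or
an RC doubling step, through connected shapes. -/
theorem baseline_then_RC_constructor (S_F : Finset (ℤ × ℤ)) (hF : S_F.Nonempty)
    (hcF : ShapeConnected S_F) :
    ∃ m ≤ 4 * (Baseline S_F).card + 2 * Nat.clog 2 S_F.card,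
      ∃ T : ℕ → Finset (ℤ × ℤ),
        (∃ a b : ℤ, T 0 = {(a, b)}) ∧
        (∃ v : ℤ × ℤ, T m = translateSh v S_F) ∧
        (∀ i ≤ m, (T i).Nonempty ∧ ShapeConnected (T i)) ∧
        (∀ i < m, AddStep (T i) (T (i + 1)) ∨ RCStep (T i) (T (i + 1))) := by
  obtain ⟨k, hk, hRC⟩ := exists_RCChain hcF hF
  obtain ⟨⟨p, hp⟩, hB⟩ := hRC.left
  let step S T := AddStep S T ∨ RCStep S T
  obtain ⟨T, h0, hm, hP, hstep⟩ :=
    ((exists_addChain hB hp).mono (r' := step) fun _ _ => .inl).append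
      (hRC.mono (r' := step) fun _ _ => .inr)
  exact ⟨_, by omega, T, ⟨p.1, p.2, h0⟩, ⟨_, hm⟩, hP, hstep⟩
end

section
/- RC doubling preserves connectivity: if S is a connected shape and D is an admissible nonempty doubled set, then RC_E(S,D) is connected; likewise RC_N(S,D) is connected. -/
/-! The map `p ↦ (p.1 + w(D, p.1), p.2)` embeds `S` into `RC_E(S, D)`. Vertical neighbours stay
neighbours; horizontal neighbours `p`, `p + (1, 0)` are sent either to neighbours or, when
`p.1 ∈ D`, to points two apart whose gap is the copy of `p` in the doubled column. Every new
point is adjacent to the image of the point it copies, so connectivity survives. The north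
doubling is the east doubling of the transposed shape, transposed back. -/

open Finset Relation

def ShapeJoined (S : Finset (ℤ × ℤ)) : ℤ × ℤ → ℤ × ℤ → Prop :=
  ReflTransGen fun a b => a ∈ S ∧ b ∈ S ∧ Adj a b

theorem Adj.symm_s19 {a b : ℤ × ℤ} (h : Adj a b) : Adj b a := by
  unfold Adj at *; omega

theorem adj_swap_iff {a b : ℤ × ℤ} : Adj a.swap b.swap ↔ Adj a b := by
  unfold Adj; simp only [Prod.fst_swap, Prod.snd_swap]; omega

namespace ShapeJoined

variable {S : Finset (ℤ × ℤ)} {a b c : ℤ × ℤ}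

theorem of_adj (ha : a ∈ S) (hb : b ∈ S) (h : Adj a b) : ShapeJoined S a b :=
  ReflTransGen.single ⟨ha, hb, h⟩

theorem trans (hab : ShapeJoined S a b) (hbc : ShapeJoined S b c) : ShapeJoined S a c :=
  ReflTransGen.trans hab hbc

theorem symm_s19 (h : ShapeJoined S a b) : ShapeJoined S b a := by
  induction h with
  | refl => exact ReflTransGen.refl
  | tail _ hxy ih => exact (of_adj hxy.2.1 hxy.1 hxy.2.2.symm_s19).trans ih

theorem map {T : Finset (ℤ × ℤ)} (f : ℤ × ℤ → ℤ × ℤ)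
    (hf : ∀ x ∈ S, ∀ y ∈ S, Adj x y → ShapeJoined T (f x) (f y)) (h : ShapeJoined S a b) :
    ShapeJoined T (f a) (f b) := by
  induction h with
  | refl => exact ReflTransGen.refl
  | tail _ hxy ih => exact ih.trans (hf _ hxy.1 _ hxy.2.1 hxy.2.2)

theorem image_swap (h : ShapeJoined S a b) : ShapeJoined (S.image Prod.swap) a.swap b.swap :=
  h.map _ fun _ hx _ hy hxy =>
    of_adj (mem_image_of_mem _ hx) (mem_image_of_mem _ hy) (adj_swap_iff.2 hxy)

end ShapeJoined

theorem ShapeConnected.image_swap {S : Finset (ℤ × ℤ)} (h : ShapeConnected S) :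
    ShapeConnected (S.image Prod.swap) := by
  intro u hu v hv
  obtain ⟨p, hp, rfl⟩ := mem_image.1 hu
  obtain ⟨q, hq, rfl⟩ := mem_image.1 hv
  exact ShapeJoined.image_swap (h p hp q hq)

theorem ShapeConnected.of_joined_image {S T : Finset (ℤ × ℤ)} (hS : ShapeConnected S)
    (f : ℤ × ℤ → ℤ × ℤ) (hf : ∀ p ∈ S, ∀ q ∈ S, Adj p q → ShapeJoined T (f p) (f q))
    (hT : ∀ a ∈ T, ∃ p ∈ S, ShapeJoined T a (f p)) : ShapeConnected T := by
  intro u hu v hv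
  obtain ⟨p, hp, hup⟩ := hT u hu
  obtain ⟨q, hq, hvq⟩ := hT v hv
  exact hup.trans ((ShapeJoined.map f hf (hS p hp q hq)).trans hvq.symm_s19)

section RCE

variable {S : Finset (ℤ × ℤ)} {D : Finset ℤ} {p q : ℤ × ℤ}

theorem mem_RCE_of_mem (hp : p ∈ S) : (p.1 + (wD D p.1 : ℤ), p.2) ∈ RCE S D :=
  mem_union_left _ (mem_image_of_mem _ hp)

theorem mem_RCE_of_mem_of_fst_mem (hp : p ∈ S) (hD : p.1 ∈ D) :
    (p.1 + (wD D p.1 : ℤ) + 1, p.2) ∈ RCE S D :=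
  mem_union_right _ (mem_image_of_mem _ (mem_filter.2 ⟨hp, hD⟩))

theorem shapeJoined_RCE_of_east (hp : p ∈ S) (hq : q ∈ S) (h1 : q.1 = p.1 + 1) (h2 : q.2 = p.2) :
    ShapeJoined (RCE S D) (p.1 + (wD D p.1 : ℤ), p.2) (q.1 + (wD D q.1 : ℤ), q.2) := by
  have hw := wD_add_one D p.1
  by_cases hD : p.1 ∈ D
  · rw [if_pos hD] at hw
    have hcopy := mem_RCE_of_mem_of_fst_mem hp hD
    refine (ShapeJoined.of_adj (mem_RCE_of_mem hp) hcopy ?_).trans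
      (ShapeJoined.of_adj hcopy (mem_RCE_of_mem hq) ?_)
    · simp only [Adj]; omega
    · simp only [Adj, h1, h2, hw]; push_cast; omega
  · rw [if_neg hD] at hw
    refine ShapeJoined.of_adj (mem_RCE_of_mem hp) (mem_RCE_of_mem hq) ?_
    simp only [Adj, h1, h2, hw]; push_cast; omega

theorem shapeJoined_RCE_of_adj (hp : p ∈ S) (hq : q ∈ S) (h : Adj p q) :
    ShapeJoined (RCE S D) (p.1 + (wD D p.1 : ℤ), p.2) (q.1 + (wD D q.1 : ℤ), q.2) := by
  unfold Adj at h
  rcases (by omega : p.1 = q.1 ∨ q.1 = p.1 + 1 ∧ q.2 = p.2 ∨ p.1 = q.1 + 1 ∧ p.2 = q.2) with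
    hcol | ⟨h1, h2⟩ | ⟨h1, h2⟩
  · refine ShapeJoined.of_adj (mem_RCE_of_mem hp) (mem_RCE_of_mem hq) ?_
    simp only [Adj, hcol]; omega
  · exact shapeJoined_RCE_of_east hp hq h1 h2
  · exact (shapeJoined_RCE_of_east hq hp h1 h2).symm_s19

theorem ShapeConnected.RCE (hS : ShapeConnected S) (D : Finset ℤ) :
    ShapeConnected (RCE S D) := by
  refine hS.of_joined_image _ (fun p hp q hq => shapeJoined_RCE_of_adj hp hq) fun a ha => ?_
  rcases mem_union.1 ha with hmain | hcopy
  · obtain ⟨p, hp, rfl⟩ := mem_image.1 hmain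
    exact ⟨p, hp, ReflTransGen.refl⟩
  · obtain ⟨p, hp, rfl⟩ := mem_image.1 hcopy
    have hp := (mem_filter.1 hp).1
    exact ⟨p, hp, ShapeJoined.of_adj ha (mem_RCE_of_mem hp) (by simp only [Adj]; omega)⟩

end RCE

theorem RCN_eq_swap_RCE_swap (S : Finset (ℤ × ℤ)) (D : Finset ℤ) :
    RCN S D = (RCE (S.image Prod.swap) D).image Prod.swap := by
  simp only [RCN, RCE, image_union, image_image, filter_image]
  rfl

theorem RC_preserves_connectivity_general (S : Finset (ℤ × ℤ))
    (hconn : ShapeConnected S) (D : Finset ℤ) :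
    (eastAdmissible S D → ShapeConnected (RCE S D)) ∧
      (northAdmissible S D → ShapeConnected (RCN S D)) := by
  refine ⟨fun _ => hconn.RCE D, fun _ => ?_⟩
  rw [RCN_eq_swap_RCE_swap]
  simpa only [image_image, Prod.swap_swap_eq, image_id] using (hconn.image_swap.RCE D).image_swap

/-- RC doubling preserves connectivity. -/
theorem RC_preserves_connectivity (S : Finset (ℤ × ℤ)) (hS : S.Nonempty)
    (hconn : ShapeConnected S) (D : Finset ℤ) :
    (eastAdmissible S D → ShapeConnected (RCE S D)) ∧
      (northAdmissible S D → ShapeConnected (RCN S D)) :=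
  RC_preserves_connectivity_general S hconn D
end
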